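/- arXiv:2203.06587 — 6 statements merged into one kernel-verified Lean document; each statement's English description precedes it below -/
import Mathlib

section
/- For two finite-horizon MDPs M and M' with transitions P and P', an agent policy π, a perturbation σ valid for P, and a perturbation σ̃ valid for P', the value difference decomposes as: V^{π,σ}_M(s_0) - V^{π,σ̃}_{M'}(s_0) = Σ_{h=1}^H Σ_{s∈S_h} Σ_a ξ^{π,σ}_M(s,a) · (P(s,a) - P'(s,a) + σ(s,a) - σ̃(s,a))^T V^{π,σ̃}_{M',h+1}. -/
open Finset

/-- Lemma "v_gap_decompose_gen": for two finite-horizon MDPs with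
transitions `P`, `P'`, a policy `π`, a perturbation `σ` valid for `P` and a perturbation
`σ̃` valid for `P'`, the value difference decomposes as
`V^{π,σ}_M(s₀) - V^{π,σ̃}_{M'}(s₀)
 = Σ_{h=1}^H Σ_{s∈S_h} Σ_a ξ^{π,σ}_M(s,a) · (P(s,a)-P'(s,a)+σ(s,a)-σ̃(s,a))ᵀ V^{π,σ̃}_{M',h+1}`. -/
theorem value_difference_decomposition_general
    (S A : Type) [Fintype S] [Fintype A] [DecidableEq S] [DecidableEq A]
    (H : ℕ) (hH : 1 ≤ H)
    (depth : S → ℕ) (hdepth : ∀ s, 1 ≤ depth s ∧ depth s ≤ H)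
    (s0 : S) (hs0 : depth s0 = 1)
    (r : S → A → ℝ)
    (P P' σ σt : S → A → S → ℝ) (π : S → A)
    -- P+σ is a valid depth-layered transition function (σ valid for P)
    (hT : ∀ s a, (∀ s', 0 ≤ P s a s' + σ s a s')
       ∧ (depth s < H → ∑ s', (P s a s' + σ s a s') = 1)
       ∧ (∀ s', P s a s' + σ s a s' ≠ 0 → depth s' = depth s + 1))
    -- P'+σ̃ is a valid depth-layered transition function (σ̃ valid for P')
    (hT' : ∀ s a, (∀ s', 0 ≤ P' s a s' + σt s a s')
       ∧ (depth s < H → ∑ s', (P' s a s' + σt s a s') = 1)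
       ∧ (∀ s', P' s a s' + σt s a s' ≠ 0 → depth s' = depth s + 1))
    (V V' : S → ℝ)
    -- Bellman recursions for V = V^{π,σ}_M and V' = V^{π,σ̃}_{M'} (terminal value 0)
    (hV : ∀ s, depth s < H →
        V s = r s (π s) + ∑ s', (P s (π s) s' + σ s (π s) s') * V s')
    (hVH : ∀ s, depth s = H → V s = r s (π s))
    (hV' : ∀ s, depth s < H →
        V' s = r s (π s) + ∑ s', (P' s (π s) s' + σt s (π s) s') * V' s')
    (hV'H : ∀ s, depth s = H → V' s = r s (π s))
    -- ξ = reaching probabilities in M under (π, σ)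
    (ξ : S → A → ℝ)
    (hξ1 : ∀ s a, depth s = 1 → ξ s a = if s = s0 ∧ a = π s then 1 else 0)
    (hξ : ∀ s', 1 < depth s' → ∀ a', ξ s' a' =
      if a' = π s' then
        ∑ s ∈ univ.filter (fun s => depth s = depth s' - 1),
          ξ s (π s) * (P s (π s) s' + σ s (π s) s')
      else 0) :
    V s0 - V' s0 =
      ∑ h ∈ Finset.Icc 1 H, ∑ s ∈ univ.filter (fun s => depth s = h), ∑ a,
        ξ s a * ∑ s' ∈ univ.filter (fun s' => depth s' = h + 1),
          (P s a s' - P' s a s' + σ s a s' - σt s a s') * V' s' := by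
  classical
  -- ξ vanishes off-policy
  have hξ0 : ∀ s a, a ≠ π s → ξ s a = 0 := by
    intro s a ha
    rcases lt_or_eq_of_le (hdepth s).1 with h1 | h1
    · rw [hξ s h1 a, if_neg ha]
    · rw [hξ1 s a h1.symm, if_neg]
      rintro ⟨_, h⟩; exact ha h
  set G : ℕ → ℝ := fun h => ∑ s ∈ univ.filter (fun s => depth s = h),
      ξ s (π s) * (V s - V' s) with hG
  set T : ℕ → ℝ := fun h => ∑ s ∈ univ.filter (fun s => depth s = h), ∑ a,
        ξ s a * ∑ s' ∈ univ.filter (fun s' => depth s' = h + 1),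
          (P s a s' - P' s a s' + σ s a s' - σt s a s') * V' s' with hTdef
  -- collapse the action sum in T
  have hTa : ∀ h, T h = ∑ s ∈ univ.filter (fun s => depth s = h),
      ξ s (π s) * ∑ s' ∈ univ.filter (fun s' => depth s' = h + 1),
          (P s (π s) s' - P' s (π s) s' + σ s (π s) s' - σt s (π s) s') * V' s' := by
    intro h
    refine Finset.sum_congr rfl fun s _ => ?_
    rw [Fintype.sum_eq_single (π s)]
    intro a ha
    rw [hξ0 s a ha, zero_mul]
  -- G vanishes above H
  have hGtop : ∀ h, H < h → G h = 0 := by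
    intro h hh
    apply Finset.sum_eq_zero
    intro s hs
    rw [Finset.mem_filter] at hs
    exact absurd hs.2 (by have := (hdepth s).2; omega)
  -- key step
  have key : ∀ h, 1 ≤ h → h ≤ H → G h - G (h+1) = T h := by
    intro h h1 h2
    rcases Nat.eq_or_lt_of_le h2 with hEq | hlt
    · subst hEq
      have hGH : G h = 0 := by
        apply Finset.sum_eq_zero
        intro s hs
        rw [Finset.mem_filter] at hs
        rw [hVH s hs.2, hV'H s hs.2]; ring
      have hTH : T h = 0 := by
        rw [hTa h]
        apply Finset.sum_eq_zero
        intro s hs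
        have he : (univ.filter (fun s' => depth s' = h + 1)) = (∅ : Finset S) := by
          apply Finset.filter_eq_empty_iff.2
          intro s' _
          have := (hdepth s').2; omega
        rw [he, Finset.sum_empty, mul_zero]
      rw [hGH, hGtop _ (by omega), hTH]; ring
    · -- h < H
      have hstep : ∀ s, depth s = h →
          V s - V' s =
            ∑ s' ∈ univ.filter (fun s' => depth s' = h + 1),
              ((P s (π s) s' + σ s (π s) s') * (V s' - V' s')
               + (P s (π s) s' - P' s (π s) s' + σ s (π s) s' - σt s (π s) s') * V' s') := by
        intro s hs
        have hlt' : depth s < H := by omega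
        rw [hV s hlt', hV' s hlt']
        have h1' : (r s (π s) + ∑ s', (P s (π s) s' + σ s (π s) s') * V s')
            - (r s (π s) + ∑ s', (P' s (π s) s' + σt s (π s) s') * V' s')
            = ∑ s', ((P s (π s) s' + σ s (π s) s') * (V s' - V' s')
               + (P s (π s) s' - P' s (π s) s' + σ s (π s) s' - σt s (π s) s') * V' s') := by
          have e : (r s (π s) + ∑ s', (P s (π s) s' + σ s (π s) s') * V s')
              - (r s (π s) + ∑ s', (P' s (π s) s' + σt s (π s) s') * V' s')
              = (∑ s', (P s (π s) s' + σ s (π s) s') * V s')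
                - ∑ s', (P' s (π s) s' + σt s (π s) s') * V' s' := by ring
          rw [e, ← Finset.sum_sub_distrib]
          exact Finset.sum_congr rfl fun s' _ => by ring
        rw [h1']
        symm
        apply Finset.sum_filter_of_ne
        intro s' _ hne
        by_contra hd
        have hA : P s (π s) s' + σ s (π s) s' = 0 := by
          by_contra hA
          exact hd (by rw [(hT s (π s)).2.2 s' hA, hs])
        have hB : P' s (π s) s' + σt s (π s) s' = 0 := by
          by_contra hB
          exact hd (by rw [(hT' s (π s)).2.2 s' hB, hs])
        apply hne
        have hD : P s (π s) s' - P' s (π s) s' + σ s (π s) s' - σt s (π s) s' = 0 := by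
          linarith
        rw [hD, zero_mul, add_zero, hA, zero_mul]
      -- expand G h
      have hGh : G h = (∑ s ∈ univ.filter (fun s => depth s = h),
          ∑ s' ∈ univ.filter (fun s' => depth s' = h + 1),
            ξ s (π s) * ((P s (π s) s' + σ s (π s) s') * (V s' - V' s'))) + T h := by
        rw [hTa h, hG]
        rw [← Finset.sum_add_distrib]
        refine Finset.sum_congr rfl fun s hs => ?_
        rw [Finset.mem_filter] at hs
        rw [hstep s hs.2, Finset.mul_sum, Finset.mul_sum, ← Finset.sum_add_distrib]
        refine Finset.sum_congr rfl fun s' _ => ?_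
        ring
      -- the first summand is G (h+1)
      have hfirst : (∑ s ∈ univ.filter (fun s => depth s = h),
          ∑ s' ∈ univ.filter (fun s' => depth s' = h + 1),
            ξ s (π s) * ((P s (π s) s' + σ s (π s) s') * (V s' - V' s'))) = G (h+1) := by
        rw [Finset.sum_comm, hG]
        refine Finset.sum_congr rfl fun s' hs' => ?_
        rw [Finset.mem_filter] at hs'
        have hd1 : 1 < depth s' := by omega
        have hξs' : ξ s' (π s') = ∑ s ∈ univ.filter (fun s => depth s = h),
            ξ s (π s) * (P s (π s) s' + σ s (π s) s') := by
          rw [hξ s' hd1 (π s'), if_pos rfl]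
          congr 1
          ext s
          simp [hs'.2]
        rw [hξs', Finset.sum_mul]
        refine Finset.sum_congr rfl fun s _ => ?_
        ring
      rw [hGh, hfirst]; ring
  -- telescope
  have tele : ∀ n : ℕ, 1 ≤ n → ∑ h ∈ Finset.Icc 1 n, (G h - G (h+1)) = G 1 - G (n+1) := by
    intro n hn
    induction n with
    | zero => omega
    | succ m ih =>
      rcases Nat.eq_or_lt_of_le hn with h | h
      · simp [← h]
      · rw [Finset.sum_Icc_succ_top (by omega : 1 ≤ m + 1), ih (by omega)]; ring
  have htel : ∑ h ∈ Finset.Icc 1 H, T h = G 1 - G (H+1) := by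
    have e1 : ∑ h ∈ Finset.Icc 1 H, T h = ∑ h ∈ Finset.Icc 1 H, (G h - G (h+1)) :=
      Finset.sum_congr rfl fun h hh => by
        rw [Finset.mem_Icc] at hh
        exact (key h hh.1 hh.2).symm
    rw [e1, tele H hH]
  -- G 1 = V s0 - V' s0
  have hG1 : G 1 = V s0 - V' s0 := by
    have e : G 1 = ∑ s ∈ univ.filter (fun s => depth s = 1), ξ s (π s) * (V s - V' s) := rfl
    rw [e, Finset.sum_eq_single s0]
    · rw [hξ1 s0 (π s0) hs0, if_pos ⟨rfl, rfl⟩, one_mul]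
    · intro s hs hne
      rw [Finset.mem_filter] at hs
      rw [hξ1 s (π s) hs.2, if_neg (fun hc => hne hc.1), zero_mul]
    · intro hs
      exact absurd (Finset.mem_filter.2 ⟨Finset.mem_univ s0, hs0⟩) hs
  rw [show (∑ h ∈ Finset.Icc 1 H, ∑ s ∈ univ.filter (fun s => depth s = h), ∑ a,
        ξ s a * ∑ s' ∈ univ.filter (fun s' => depth s' = h + 1),
          (P s a s' - P' s a s' + σ s a s' - σt s a s') * V' s') = ∑ h ∈ Finset.Icc 1 H, T h from rfl,
    htel, hG1, hGtop _ (by omega)]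
  ring
end

section
/- Let (π*, σ*) be a Nash equilibrium of the zero-sum game defined by MDP M^s with perturbation set U(P^s) (agent maximizing, perturbation minimizing the value at s_0), and (π̂*, σ̂*) a Nash equilibrium for the empirical MDP M̂ with perturbation set U(P̂). Let σ' be the best response in U(P^s) to π̂* on M^s, let σ̃* be the projection of σ̂* onto U(P^s), and σ̃' the projection of σ' onto U(P̂). Then the suboptimality error Err(π̂*) = V^{π*,σ*}_{M^s}(s_0) - V^{π̂*,σ'}_{M^s}(s_0) satisfies Err(π̂*) ≤ (V^{π*,σ̃*}_{M^s}(s_0) - V^{π*,σ̂*}_{M̂}(s_0)) + (V^{π̂*,σ̃'}_{M̂}(s_0) - V^{π̂*,σ'}_{M^s}(s_0)). -/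
/-- error-decomposition lemma. `Vs π σ` (resp. `Vh π σ`) is the value
`V^{π,σ}_{M^s}(s₀)` (resp. `V^{π,σ}_{M̂}(s₀)`); `(πstar, σstar)` is a Nash equilibrium
for `M^s` with perturbation set `Us`, `(pihat, sighat)` one for `M̂` with set `Uh`;
`σ'` is the best response in `Us` to `pihat` on `M^s`; `σ̃*` (resp. `σ̃'`) is the
projection (minimizing the max-over-(s,a) ℓ1-distance `d`) of `sighat` onto `Us`
(resp. of `σ'` onto `Uh`). Then
`Err(π̂*) ≤ (V^{π*,σ̃*}_{M^s} - V^{π*,σ̂*}_{M̂}) + (V^{π̂*,σ̃'}_{M̂} - V^{π̂*,σ'}_{M^s})`. -/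
theorem err_decomposition (Pol Pert : Type)
    (Vs Vh : Pol → Pert → ℝ)
    (Us Uh : Set Pert)
    (d : Pert → Pert → ℝ)
    (pistar pihat : Pol) (sigstar sighat sig' sigtilstar sigtil' : Pert)
    -- (π*, σ*) is a Nash equilibrium for M^s with perturbation set Us
    (hsigstar : sigstar ∈ Us)
    (hNE1a : ∀ π, Vs π sigstar ≤ Vs pistar sigstar)
    (hNE1b : ∀ σ ∈ Us, Vs pistar sigstar ≤ Vs pistar σ)
    -- (π̂*, σ̂*) is a Nash equilibrium for M̂ with perturbation set Uh
    (hsighat : sighat ∈ Uh)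
    (hNE2a : ∀ π, Vh π sighat ≤ Vh pihat sighat)
    (hNE2b : ∀ σ ∈ Uh, Vh pihat sighat ≤ Vh pihat σ)
    -- σ' is the best response in Us to π̂* on M^s
    (hsig' : sig' ∈ Us)
    (hbr : ∀ σ ∈ Us, Vs pihat sig' ≤ Vs pihat σ)
    -- σ̃* is the projection of σ̂* onto Us
    (hproj1 : sigtilstar ∈ Us ∧ ∀ τ ∈ Us, d sighat sigtilstar ≤ d sighat τ)
    -- σ̃' is the projection of σ' onto Uh
    (hproj2 : sigtil' ∈ Uh ∧ ∀ τ ∈ Uh, d sig' sigtil' ≤ d sig' τ) :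
    Vs pistar sigstar - Vs pihat sig' ≤
      (Vs pistar sigtilstar - Vh pistar sighat) + (Vh pihat sigtil' - Vs pihat sig') := by
  have h1 := hNE1b sigtilstar hproj1.1
  have h2 := hNE2a pistar
  have h3 := hNE2b sigtil' hproj2.1
  linarith
end

section
/- Suppose the constraint C satisfies the Lipschitz condition with constant λ: for any two transitions P, P' and any σ ∈ U(P), the projection σ' of σ onto U(P') satisfies ||σ(s,a) - σ'(s,a)||_1 ≤ λ||P(s,a) - P'(s,a)||_1 for all (s,a). Assume the good event holds: ||P^s(s,a) - P̂(s,a)||_1 ≤ α for all (s,a), where α = √(2D ln(2/δ')/N). Then for the Nash equilibria and projected perturbations as defined, the error term e_1 = V^{π*,σ̃*}_{M^s}(s_0) - V^{π*,σ̂*}_{M̂}(s_0) satisfies e_1 ≤ (1+λ)H²α. -/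
open Finset

/-- bound on `e₁ = V^{π*,σ̃*}_{M^s}(s₀) - V^{π*,σ̂*}_{M̂}(s₀)`. On the good
event `‖P^s(s,a) - P̂(s,a)‖₁ ≤ α` (with `α = √(2D ln(2/δ')/N)`), and with the Lipschitz
property of the projected perturbation `‖σ̃*(s,a) - σ̂*(s,a)‖₁ ≤ λ‖P^s(s,a) - P̂(s,a)‖₁`,
we have `e₁ ≤ (1+λ)H²α`. -/
theorem e1_bound
    (S A : Type) [Fintype S] [Fintype A] [DecidableEq S] [DecidableEq A]
    (H N D : ℕ) (hH : 1 ≤ H) (hN : 1 ≤ N)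
    (depth : S → ℕ) (hdepth : ∀ s, 1 ≤ depth s ∧ depth s ≤ H)
    (s0 : S) (hs0 : depth s0 = 1)
    (hD : ∀ h : ℕ, (univ.filter fun s => depth s = h).card ≤ D)
    (r : S → A → ℝ) (hr : ∀ s a, 0 ≤ r s a ∧ r s a ≤ 1)
    (lam δ' : ℝ) (hlam : 0 ≤ lam) (hδ' : 0 < δ') (hδ'1 : δ' < 1)
    -- Ps = training transition, Phat = empirical transition,
    -- sigtil = σ̃* ∈ U(P^s) (projection of σ̂*), sighat = σ̂* ∈ U(P̂)
    (Ps Phat sigtil sighat : S → A → S → ℝ) (π : S → A)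
    -- P^s + σ̃* is a valid depth-layered transition function
    (hT : ∀ s a, (∀ s', 0 ≤ Ps s a s' + sigtil s a s')
       ∧ (depth s < H → ∑ s', (Ps s a s' + sigtil s a s') = 1)
       ∧ (∀ s', Ps s a s' + sigtil s a s' ≠ 0 → depth s' = depth s + 1))
    -- P̂ + σ̂* is a valid depth-layered transition function
    (hT' : ∀ s a, (∀ s', 0 ≤ Phat s a s' + sighat s a s')
       ∧ (depth s < H → ∑ s', (Phat s a s' + sighat s a s') = 1)
       ∧ (∀ s', Phat s a s' + sighat s a s' ≠ 0 → depth s' = depth s + 1))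
    (V Vhat : S → ℝ)
    -- Bellman recursions for V = V^{π*,σ̃*}_{M^s} and Vhat = V^{π*,σ̂*}_{M̂}
    (hV : ∀ s, depth s < H →
        V s = r s (π s) + ∑ s', (Ps s (π s) s' + sigtil s (π s) s') * V s')
    (hVH : ∀ s, depth s = H → V s = r s (π s))
    (hVhat : ∀ s, depth s < H →
        Vhat s = r s (π s) + ∑ s', (Phat s (π s) s' + sighat s (π s) s') * Vhat s')
    (hVhatH : ∀ s, depth s = H → Vhat s = r s (π s))
    -- value bounds (rewards in [0,1] over horizon H)
    (hVhat_bd : ∀ s, 0 ≤ Vhat s ∧ Vhat s ≤ H)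
    -- reaching probabilities of (π*, σ̃*) on M^s
    (ξ : S → A → ℝ) (hξ0 : ∀ s a, 0 ≤ ξ s a)
    (hξ1 : ∀ s a, depth s = 1 → ξ s a = if s = s0 ∧ a = π s then 1 else 0)
    (hξ : ∀ s', 1 < depth s' → ∀ a', ξ s' a' =
      if a' = π s' then
        ∑ s ∈ univ.filter (fun s => depth s = depth s' - 1),
          ξ s (π s) * (Ps s (π s) s' + sigtil s (π s) s')
      else 0)
    -- good event: ℓ1 estimation error at most α for every (s,a)
    (hgood : ∀ s a, ∑ s', |Ps s a s' - Phat s a s'|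
        ≤ Real.sqrt (2 * D * Real.log (2 / δ') / N))
    -- Lipschitz condition applied to the projection σ̃* of σ̂* onto U(P^s)
    (hLip : ∀ s a, ∑ s', |sigtil s a s' - sighat s a s'|
        ≤ lam * ∑ s', |Ps s a s' - Phat s a s'|) :
    V s0 - Vhat s0
      ≤ (1 + lam) * H ^ 2 * Real.sqrt (2 * D * Real.log (2 / δ') / N) := by
  set α := Real.sqrt (2 * D * Real.log (2 / δ') / N) with hαdef
  have hα0 : 0 ≤ α := Real.sqrt_nonneg _
  set C := (1 + lam) * H * α with hCdef
  have hC0 : 0 ≤ C := by positivity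
  set F : ℕ → Finset S := fun h => univ.filter (fun s => depth s = h) with hFdef
  set W : ℕ → ℝ := fun h => ∑ s ∈ F h, ξ s (π s) * (V s - Vhat s) with hWdef
  -- per-(s,a) perturbation bound
  have hpert : ∀ s a, |∑ s', (Ps s a s' + sigtil s a s'
      - (Phat s a s' + sighat s a s')) * Vhat s'| ≤ C := by
    intro s a
    have h1 : |∑ s', (Ps s a s' + sigtil s a s' - (Phat s a s' + sighat s a s')) * Vhat s'|
        ≤ ∑ s', |(Ps s a s' + sigtil s a s' - (Phat s a s' + sighat s a s')) * Vhat s'| :=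
      Finset.abs_sum_le_sum_abs _ _
    have h2 : ∑ s', |(Ps s a s' + sigtil s a s' - (Phat s a s' + sighat s a s')) * Vhat s'|
        ≤ ∑ s', (|Ps s a s' - Phat s a s'| + |sigtil s a s' - sighat s a s'|) * (H : ℝ) := by
      apply Finset.sum_le_sum
      intro s' _
      rw [abs_mul]
      have e : Ps s a s' + sigtil s a s' - (Phat s a s' + sighat s a s')
          = (Ps s a s' - Phat s a s') + (sigtil s a s' - sighat s a s') := by ring
      have hA : |Ps s a s' + sigtil s a s' - (Phat s a s' + sighat s a s')|
          ≤ |Ps s a s' - Phat s a s'| + |sigtil s a s' - sighat s a s'| := by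
        rw [e]; exact abs_add_le _ _
      have hB : |Vhat s'| ≤ (H : ℝ) :=
        abs_le.mpr ⟨by linarith [(hVhat_bd s').1], (hVhat_bd s').2⟩
      exact mul_le_mul hA hB (abs_nonneg _) (by positivity)
    have h3 : ∑ s', (|Ps s a s' - Phat s a s'| + |sigtil s a s' - sighat s a s'|) * (H : ℝ)
        = ((∑ s', |Ps s a s' - Phat s a s'|) + ∑ s', |sigtil s a s' - sighat s a s'|) * (H : ℝ) := by
      rw [← Finset.sum_mul]
      congr 1
      exact Finset.sum_add_distrib
    have h4 : (∑ s', |Ps s a s' - Phat s a s'|) + ∑ s', |sigtil s a s' - sighat s a s'|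
        ≤ (1 + lam) * α := by
      have hg := hgood s a
      have hl := hLip s a
      have : lam * ∑ s', |Ps s a s' - Phat s a s'| ≤ lam * α :=
        mul_le_mul_of_nonneg_left hg hlam
      nlinarith
    calc |∑ s', (Ps s a s' + sigtil s a s' - (Phat s a s' + sighat s a s')) * Vhat s'|
        ≤ ((∑ s', |Ps s a s' - Phat s a s'|) + ∑ s', |sigtil s a s' - sighat s a s'|) * (H : ℝ) := by
          rw [← h3]; exact le_trans h1 h2
      _ ≤ (1 + lam) * α * (H : ℝ) :=
          mul_le_mul_of_nonneg_right h4 (by positivity)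
      _ = C := by rw [hCdef]; ring
  -- exchange lemma
  have hswap : ∀ (f : S → ℝ) (h : ℕ), 1 ≤ h → h < H →
      ∑ s ∈ F h, ξ s (π s) * ∑ s', (Ps s (π s) s' + sigtil s (π s) s') * f s'
      = ∑ s' ∈ F (h+1), ξ s' (π s') * f s' := by
    intro f h h1 hhH
    calc ∑ s ∈ F h, ξ s (π s) * ∑ s', (Ps s (π s) s' + sigtil s (π s) s') * f s'
        = ∑ s ∈ F h, ∑ s' : S, ξ s (π s) * ((Ps s (π s) s' + sigtil s (π s) s') * f s') := by
          apply Finset.sum_congr rfl; intro s _; rw [Finset.mul_sum]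
      _ = ∑ s' : S, ∑ s ∈ F h, ξ s (π s) * ((Ps s (π s) s' + sigtil s (π s) s') * f s') :=
          Finset.sum_comm
      _ = ∑ s' ∈ F (h+1), ∑ s ∈ F h, ξ s (π s) * ((Ps s (π s) s' + sigtil s (π s) s') * f s') := by
          symm
          apply Finset.sum_subset (Finset.filter_subset _ _)
          intro s' _ hs'
          apply Finset.sum_eq_zero
          intro s hs
          have hds : depth s = h := (Finset.mem_filter.mp hs).2
          have hT0 : Ps s (π s) s' + sigtil s (π s) s' = 0 := by
            by_contra hne
            have hd := (hT s (π s)).2.2 s' hne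
            exact hs' (by simp [hFdef, Finset.mem_filter, hd, hds])
          simp [hT0]
      _ = ∑ s' ∈ F (h+1), ξ s' (π s') * f s' := by
          apply Finset.sum_congr rfl
          intro s' hs'
          have hd : depth s' = h + 1 := (Finset.mem_filter.mp hs').2
          have h1' : 1 < depth s' := by omega
          rw [hξ s' h1' (π s')]
          simp only [if_pos rfl, if_true, eq_self_iff_true, hd, Nat.add_sub_cancel]
          rw [Finset.sum_mul]
          apply Finset.sum_congr rfl; intro s _; ring
  -- total mass is 1 at every layer
  have hΞ1 : ∑ s ∈ F 1, ξ s (π s) = 1 := by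
    have hcong : ∀ s ∈ F 1, ξ s (π s) = if s = s0 then 1 else 0 := by
      intro s hs
      rw [hξ1 s (π s) (Finset.mem_filter.mp hs).2]
      simp
    rw [Finset.sum_congr rfl hcong, Finset.sum_ite_eq' (F 1) s0 (fun _ => (1 : ℝ))]
    simp [hFdef, Finset.mem_filter, hs0]
  have hΞ : ∀ h, 1 ≤ h → h ≤ H → ∑ s ∈ F h, ξ s (π s) = 1 := by
    intro h
    induction h with
    | zero => omega
    | succ n ih =>
      intro _ hle
      by_cases hn : n = 0
      · subst hn; exact hΞ1
      · have hn1 : 1 ≤ n := Nat.one_le_iff_ne_zero.mpr hn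
        have hnH : n < H := by omega
        have hs := hswap (fun _ => 1) n hn1 hnH
        simp only [mul_one] at hs
        calc ∑ s ∈ F (n+1), ξ s (π s)
            = ∑ s ∈ F n, ξ s (π s) * ∑ s', (Ps s (π s) s' + sigtil s (π s) s') := hs.symm
          _ = ∑ s ∈ F n, ξ s (π s) := by
              apply Finset.sum_congr rfl
              intro s hsm
              rw [(hT s (π s)).2.1 (by rw [(Finset.mem_filter.mp hsm).2]; exact hnH), mul_one]
          _ = 1 := ih hn1 hnH.le
  -- one-step recursion
  have hrec : ∀ h, 1 ≤ h → h < H → W h ≤ W (h+1) + C := by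
    intro h h1 hhH
    have key : W h = W (h+1)
        + ∑ s ∈ F h, ξ s (π s) * ∑ s', (Ps s (π s) s' + sigtil s (π s) s'
            - (Phat s (π s) s' + sighat s (π s) s')) * Vhat s' := by
      have e1 : W h = ∑ s ∈ F h, (ξ s (π s) * ∑ s', (Ps s (π s) s' + sigtil s (π s) s') * (V s' - Vhat s')
          + ξ s (π s) * ∑ s', (Ps s (π s) s' + sigtil s (π s) s'
              - (Phat s (π s) s' + sighat s (π s) s')) * Vhat s') := by
        apply Finset.sum_congr rfl
        intro s hs
        have hd : depth s = h := (Finset.mem_filter.mp hs).2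
        have hlt : depth s < H := by omega
        rw [hV s hlt, hVhat s hlt]
        rw [← mul_add, ← Finset.sum_add_distrib]
        have : ∑ s', ((Ps s (π s) s' + sigtil s (π s) s') * (V s' - Vhat s')
            + (Ps s (π s) s' + sigtil s (π s) s' - (Phat s (π s) s' + sighat s (π s) s')) * Vhat s')
            = ∑ s', ((Ps s (π s) s' + sigtil s (π s) s') * V s'
              - (Phat s (π s) s' + sighat s (π s) s') * Vhat s') := by
          apply Finset.sum_congr rfl; intro s' _; ring
        rw [this, Finset.sum_sub_distrib]
        ring
      rw [e1, Finset.sum_add_distrib, hswap (fun s' => V s' - Vhat s') h h1 hhH]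
    rw [key]
    have hbd : ∑ s ∈ F h, ξ s (π s) * ∑ s', (Ps s (π s) s' + sigtil s (π s) s'
        - (Phat s (π s) s' + sighat s (π s) s')) * Vhat s' ≤ C := by
      calc ∑ s ∈ F h, ξ s (π s) * ∑ s', (Ps s (π s) s' + sigtil s (π s) s'
            - (Phat s (π s) s' + sighat s (π s) s')) * Vhat s'
          ≤ ∑ s ∈ F h, ξ s (π s) * C := by
            apply Finset.sum_le_sum
            intro s _
            exact mul_le_mul_of_nonneg_left
              (le_trans (le_abs_self _) (hpert s (π s))) (hξ0 s (π s))
        _ = (∑ s ∈ F h, ξ s (π s)) * C := by rw [Finset.sum_mul]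
        _ = C := by rw [hΞ h h1 hhH.le, one_mul]
    linarith
  -- terminal layer
  have hWH : W H = 0 := by
    apply Finset.sum_eq_zero
    intro s hs
    have hd : depth s = H := (Finset.mem_filter.mp hs).2
    rw [hVH s hd, hVhatH s hd]
    ring
  -- downward induction
  have main : ∀ n : ℕ, ∀ h, 1 ≤ h → h + n = H → W h ≤ (n : ℝ) * C := by
    intro n
    induction n with
    | zero =>
      intro h h1 hh
      have : h = H := by omega
      subst this
      simp [hWH]
    | succ n ih =>
      intro h h1 hh
      have hlt : h < H := by omega
      have h2 := hrec h h1 hlt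
      have h3 := ih (h+1) (by omega) (by omega)
      push_cast
      push_cast at h3
      linarith
  have hW1 : W 1 = V s0 - Vhat s0 := by
    have hcong : ∀ s ∈ F 1, ξ s (π s) * (V s - Vhat s)
        = if s = s0 then V s - Vhat s else 0 := by
      intro s hs
      rw [hξ1 s (π s) (Finset.mem_filter.mp hs).2]
      by_cases h : s = s0 <;> simp [h]
    show ∑ s ∈ F 1, ξ s (π s) * (V s - Vhat s) = V s0 - Vhat s0
    rw [Finset.sum_congr rfl hcong, Finset.sum_ite_eq' (F 1) s0 (fun s => V s - Vhat s)]
    simp [hFdef, Finset.mem_filter, hs0]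
  have hfin := main (H - 1) 1 le_rfl (by omega)
  rw [hW1] at hfin
  have hle : ((H - 1 : ℕ) : ℝ) * C ≤ (H : ℝ) * C := by
    apply mul_le_mul_of_nonneg_right _ hC0
    exact_mod_cast Nat.sub_le H 1
  calc V s0 - Vhat s0 ≤ ((H - 1 : ℕ) : ℝ) * C := hfin
    _ ≤ (H : ℝ) * C := hle
    _ = (1 + lam) * (H : ℝ) ^ 2 * α := by rw [hCdef]; ring
end

section
/- The Total Variation Distance Constraint C_TVD(·;u), defined by C_TVD(p;u) = {p' ∈ Δ_D : ||p'-p||_TV ≤ u} applied independently to each state-action pair, satisfies the Lipschitz condition for perturbations with constant λ = 2: for any transitions P, P' and any σ ∈ U(P), there exists σ' ∈ U(P') with ||σ(s,a) - σ'(s,a)||_1 ≤ 2||P(s,a) - P'(s,a)||_1 for all (s,a). -/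
/-- Pointwise key lemma: projecting `q` towards `p'` gives a simplex point in
the TV ball around `p'` whose induced perturbation is close to `q - p`. -/
lemma tvdc_pointwise (D : ℕ) (u : ℝ) (hu : 0 ≤ u)
    (p p' q : Fin D → ℝ)
    (hp' : (∀ i, 0 ≤ p' i) ∧ ∑ i, p' i = 1)
    (hq0 : ∀ i, 0 ≤ q i) (hq1 : ∑ i, q i = 1)
    (hqu : (∑ i, |q i - p i|) / 2 ≤ u) :
    ∃ q' : Fin D → ℝ, (∀ i, 0 ≤ q' i) ∧ (∑ i, q' i = 1) ∧
      (∑ i, |q' i - p' i|) / 2 ≤ u ∧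
      ∑ i, |(q i - p i) - (q' i - p' i)| ≤ 2 * ∑ i, |p i - p' i| := by
  set r : ℝ := ∑ i, |q i - p' i| with hr
  set d : ℝ := ∑ i, |p i - p' i| with hd
  have hd0 : 0 ≤ d := Finset.sum_nonneg fun i _ => abs_nonneg _
  have hrd : r ≤ 2 * u + d := by
    calc r ≤ ∑ i, (|q i - p i| + |p i - p' i|) := by
          apply Finset.sum_le_sum
          intro i _
          calc |q i - p' i| = |(q i - p i) + (p i - p' i)| := by ring_nf
            _ ≤ |q i - p i| + |p i - p' i| := abs_add_le _ _
      _ = (∑ i, |q i - p i|) + d := by rw [Finset.sum_add_distrib]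
      _ ≤ 2 * u + d := by linarith
  by_cases hcase : r ≤ 2 * u
  · refine ⟨q, hq0, hq1, by linarith, ?_⟩
    have : ∀ i, |(q i - p i) - (q i - p' i)| = |p i - p' i| := by
      intro i
      rw [show (q i - p i) - (q i - p' i) = -(p i - p' i) by ring, abs_neg]
    rw [Finset.sum_congr rfl fun i _ => this i]
    linarith
  · push_neg at hcase
    have hr0 : 0 < r := by linarith
    set t : ℝ := (r - 2 * u) / r with ht
    have ht0 : 0 ≤ t := div_nonneg (by linarith) hr0.le
    have ht1 : t ≤ 1 := by
      rw [div_le_one hr0]; linarith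
    have htr : t * r = r - 2 * u := by
      rw [ht, div_mul_cancel₀ _ hr0.ne']
    refine ⟨fun i => (1 - t) * q i + t * p' i, ?_, ?_, ?_, ?_⟩
    · intro i
      exact add_nonneg (mul_nonneg (by linarith) (hq0 i)) (mul_nonneg ht0 (hp'.1 i))
    · rw [Finset.sum_add_distrib, ← Finset.mul_sum, ← Finset.mul_sum, hq1, hp'.2]
      ring
    · have : ∀ i, |((1 - t) * q i + t * p' i) - p' i| = (1 - t) * |q i - p' i| := by
        intro i
        rw [show ((1 - t) * q i + t * p' i) - p' i = (1 - t) * (q i - p' i) by ring,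
          abs_mul, abs_of_nonneg (by linarith : (0:ℝ) ≤ 1 - t)]
      rw [Finset.sum_congr rfl fun i _ => this i, ← Finset.mul_sum, ← hr]
      nlinarith
    · have key : ∀ i, |(q i - p i) - (((1 - t) * q i + t * p' i) - p' i)|
          ≤ t * |q i - p' i| + |p i - p' i| := by
        intro i
        calc |(q i - p i) - (((1 - t) * q i + t * p' i) - p' i)|
            = |t * (q i - p' i) + -(p i - p' i)| := by ring_nf
          _ ≤ |t * (q i - p' i)| + |-(p i - p' i)| := abs_add_le _ _
          _ = t * |q i - p' i| + |p i - p' i| := by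
              rw [abs_mul, abs_of_nonneg ht0, abs_neg]
      calc ∑ i, |(q i - p i) - (((1 - t) * q i + t * p' i) - p' i)|
          ≤ ∑ i, (t * |q i - p' i| + |p i - p' i|) :=
            Finset.sum_le_sum fun i _ => key i
        _ = t * r + d := by rw [Finset.sum_add_distrib, ← Finset.mul_sum]
        _ = (r - 2 * u) + d := by rw [htr]
        _ ≤ 2 * d := by linarith

/-- The total-variation-distance constraint (radius `u`), applied
independently at each state-action pair, satisfies the Lipschitz condition for
perturbations with constant `λ = 2`. -/
theorem tvdc_lipschitz (D : ℕ) (u : ℝ) (hu : 0 ≤ u)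
    (S A : Type)
    (P P' : S → A → Fin D → ℝ)
    (hP : ∀ s a, (∀ i, 0 ≤ P s a i) ∧ ∑ i, P s a i = 1)
    (hP' : ∀ s a, (∀ i, 0 ≤ P' s a i) ∧ ∑ i, P' s a i = 1)
    (σ : S → A → Fin D → ℝ)
    -- σ ∈ U(P): at every (s,a), σ(s,a) = q - P(s,a) with q in the simplex and ‖q-P(s,a)‖_TV ≤ u
    (hσ : ∀ s a, ∃ q : Fin D → ℝ, (∀ i, 0 ≤ q i) ∧ (∑ i, q i = 1) ∧
        (∑ i, |q i - P s a i|) / 2 ≤ u ∧ σ s a = fun i => q i - P s a i) :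
    ∃ σ' : S → A → Fin D → ℝ,
      (∀ s a, ∃ q : Fin D → ℝ, (∀ i, 0 ≤ q i) ∧ (∑ i, q i = 1) ∧
        (∑ i, |q i - P' s a i|) / 2 ≤ u ∧ σ' s a = fun i => q i - P' s a i) ∧
      (∀ s a, ∑ i, |σ s a i - σ' s a i| ≤ 2 * ∑ i, |P s a i - P' s a i|) := by
  classical
  choose q hq0 hq1 hqu hσeq using hσ
  have h := fun s a => tvdc_pointwise D u hu (P s a) (P' s a) (q s a)
    (hP' s a) (hq0 s a) (hq1 s a) (hqu s a)
  choose q' hq'0 hq'1 hq'u hq'close using h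
  refine ⟨fun s a i => q' s a i - P' s a i, fun s a => ⟨q' s a, hq'0 s a, hq'1 s a, hq'u s a, rfl⟩, ?_⟩
  intro s a
  have : ∀ i, σ s a i = q s a i - P s a i := fun i => by rw [hσeq s a]
  calc ∑ i, |σ s a i - (q' s a i - P' s a i)|
      = ∑ i, |(q s a i - P s a i) - (q' s a i - P' s a i)| := by
        exact Finset.sum_congr rfl fun i _ => by rw [this i]
    _ ≤ 2 * ∑ i, |P s a i - P' s a i| := hq'close s a
end

section
/- Let ℓ* ∈ [-1,1]^D satisfy Σ_i ℓ*(i) = 0 and ||ℓ*||_1 ≤ 2u, with P̂ + ℓ* ∈ Δ_D for a probability vector P̂. Let P^s ∈ Δ_D be another probability vector, and define ℓ componentwise by: ℓ(i) = ℓ*(i) if P^s(i) + ℓ*(i) ∈ [0,1], ℓ(i) = 1 - P^s(i) if ℓ*(i) > 0 and P^s(i) + ℓ*(i) > 1, ℓ(i) = -P^s(i) if ℓ*(i) < 0 and P^s(i) + ℓ*(i) < 0. Let ℓ̃ be the element of the TVDC perturbation set of P^s (i.e., {q - P^s : q ∈ Δ_D, ||q - P^s||_1 ≤ 2u}) minimizing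 ||ℓ* - ℓ̃||_1. Then ||ℓ* - ℓ̃||_1 ≤ 2||ℓ* - ℓ||_1. -/
/-!
Clipping keeps every coordinate of `ℓ` between `0` and `ℓ*(i)` and keeps `P^s + ℓ ≥ 0`, but it
may destroy the zero sum. Since `∑ ℓ* = 0`, the defect `|∑ ℓ|` is at most `‖ℓ* - ℓ‖₁`, and it can
be removed by shrinking, by a common factor, the coordinates of `ℓ` whose sign is that of `∑ ℓ`.
The result `ℓ'` is still coordinatewise between `0` and `ℓ*`, so `P^s + ℓ'` is a probability
vector within `ℓ1` distance `‖ℓ*‖₁ ≤ 2u` of `P^s`, and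
`‖ℓ* - ℓ̃‖₁ ≤ ‖ℓ* - ℓ'‖₁ ≤ ‖ℓ* - ℓ‖₁ + |∑ ℓ| ≤ 2‖ℓ* - ℓ‖₁`.
-/

open Set Finset
open scoped Interval

noncomputable def clipIncrement (p x : ℝ) : ℝ :=
  if 0 ≤ p + x ∧ p + x ≤ 1 then x else if 0 < x then 1 - p else -p

lemma clipIncrement_mem_uIcc {p : ℝ} (hp₀ : 0 ≤ p) (hp₁ : p ≤ 1) (x : ℝ) :
    clipIncrement p x ∈ [[0, x]] := by
  unfold clipIncrement
  split_ifs with hin hx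
  · exact right_mem_uIcc
  · exact mem_uIcc_of_le (by linarith) (by grind)
  · exact mem_uIcc_of_ge (by grind) (by linarith)

lemma add_clipIncrement_nonneg (p x : ℝ) : 0 ≤ p + clipIncrement p x := by
  unfold clipIncrement
  split_ifs with hin hx
  · exact hin.1
  · linarith
  · simp

lemma add_nonneg_of_mem_uIcc_zero {p x y : ℝ} (hp : 0 ≤ p) (hx : 0 ≤ p + x) (hy : y ∈ [[0, x]]) :
    0 ≤ p + y := by
  rcases mem_uIcc.1 hy with h | h <;> linarith [h.1, h.2]

section ZeroSumCorrection

variable {ι : Type*} [Fintype ι]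

lemma exists_sum_eq_zero_mem_uIcc_of_sum_nonneg (l : ι → ℝ) (hs : 0 ≤ ∑ i, l i) :
    ∃ l' : ι → ℝ, (∀ i, l' i ∈ [[0, l i]]) ∧ ∑ i, l' i = 0 ∧
      ∑ i, |l i - l' i| = ∑ i, l i := by
  set s := ∑ i, l i
  set pos := ∑ i, max (l i) 0
  have hs_le : s ≤ pos := sum_le_sum fun i _ ↦ le_max_left _ _
  have hpos : 0 ≤ pos := sum_nonneg fun i _ ↦ le_max_right _ _
  set c := s / pos
  have hc₀ : 0 ≤ c := div_nonneg hs hpos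
  have hc₁ : c ≤ 1 := div_le_one_of_le₀ hs_le hpos
  -- when `pos = 0` also `s = 0`, so the junk value `s / 0 = 0` is harmless
  have hc : c * pos = s := by
    rcases hpos.eq_or_lt with h | h
    · rw [← h, mul_zero]; exact (le_antisymm (h ▸ hs_le) hs).symm
    · exact div_mul_cancel₀ s h.ne'
  refine ⟨fun i ↦ l i - c * max (l i) 0, fun i ↦ ?_, ?_, ?_⟩
  · dsimp only
    rcases le_total (l i) 0 with h | h
    · simp [max_eq_right h]
    · rw [max_eq_left h]
      exact mem_uIcc_of_le (by nlinarith) (by nlinarith)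
  · rw [sum_sub_distrib, ← mul_sum, hc, sub_self]
  · simp_rw [sub_sub_cancel, abs_of_nonneg (mul_nonneg hc₀ (le_max_right _ _))]
    rw [← mul_sum, hc]

lemma exists_sum_eq_zero_mem_uIcc (l : ι → ℝ) :
    ∃ l' : ι → ℝ, (∀ i, l' i ∈ [[0, l i]]) ∧ ∑ i, l' i = 0 ∧
      ∑ i, |l i - l' i| = |∑ i, l i| := by
  rcases le_total 0 (∑ i, l i) with hs | hs
  · rw [abs_of_nonneg hs]
    exact exists_sum_eq_zero_mem_uIcc_of_sum_nonneg l hs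
  · obtain ⟨l', hmem, hsum, hdist⟩ :=
      exists_sum_eq_zero_mem_uIcc_of_sum_nonneg (-l) (by simpa using hs)
    refine ⟨-l', fun i ↦ by simpa using neg_mem_neg.2 (hmem i), by simpa using hsum, ?_⟩
    rw [abs_of_nonpos hs, ← sum_neg_distrib]
    simp only [Pi.neg_apply] at hdist ⊢
    rw [← hdist]
    exact sum_congr rfl fun i _ ↦ by rw [← abs_neg]; ring_nf

lemma abs_sum_le_sum_abs_sub_of_sum_eq_zero {f g : ι → ℝ} (hg : ∑ i, g i = 0) :
    |∑ i, f i| ≤ ∑ i, |g i - f i| :=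
  calc |∑ i, f i| = |∑ i, (g i - f i)| := by rw [sum_sub_distrib, hg, zero_sub, abs_neg]
    _ ≤ ∑ i, |g i - f i| := abs_sum_le_sum_abs _ _

end ZeroSumCorrection

theorem clipping_projection_bound_general (D : ℕ) (u : ℝ)
    (Ps lstar l ltil : Fin D → ℝ)
    (hPs : (∀ i, 0 ≤ Ps i) ∧ ∑ i, Ps i = 1)
    (hlstar_sum : ∑ i, lstar i = 0)
    (hlstar_l1 : ∑ i, |lstar i| ≤ 2 * u)
    -- ℓ is the componentwise clipping of ℓ* relative to P^s
    (hl : ∀ i, l i =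
      if 0 ≤ Ps i + lstar i ∧ Ps i + lstar i ≤ 1 then lstar i
      else if 0 < lstar i then 1 - Ps i else -(Ps i))
    (hltil_min : ∀ m : Fin D → ℝ,
      (∃ q : Fin D → ℝ, (∀ i, 0 ≤ q i) ∧ (∑ i, q i = 1) ∧
        (∑ i, |q i - Ps i| ≤ 2 * u) ∧ m = fun i => q i - Ps i) →
      ∑ i, |lstar i - ltil i| ≤ ∑ i, |lstar i - m i|) :
    ∑ i, |lstar i - ltil i| ≤ 2 * ∑ i, |lstar i - l i| := by
  obtain ⟨hPs_nonneg, hPs_sum⟩ := hPs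
  have hPs_le_one i : Ps i ≤ 1 :=
    hPs_sum ▸ single_le_sum (fun j _ ↦ hPs_nonneg j) (mem_univ i)
  have hl_mem i : l i ∈ [[0, lstar i]] :=
    hl i ▸ clipIncrement_mem_uIcc (hPs_nonneg i) (hPs_le_one i) (lstar i)
  have hPs_add_l i : 0 ≤ Ps i + l i := hl i ▸ add_clipIncrement_nonneg (Ps i) (lstar i)
  obtain ⟨l', hl'_mem, hl'_sum, hl'_dist⟩ := exists_sum_eq_zero_mem_uIcc l
  have hl'_abs i : |l' i| ≤ |lstar i| := by
    simpa using abs_sub_left_of_mem_uIcc (uIcc_subset_uIcc left_mem_uIcc (hl_mem i) (hl'_mem i))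
  have hfeasible : ∃ q : Fin D → ℝ, (∀ i, 0 ≤ q i) ∧ (∑ i, q i = 1) ∧
      (∑ i, |q i - Ps i| ≤ 2 * u) ∧ l' = fun i => q i - Ps i := by
    refine ⟨fun i ↦ Ps i + l' i,
      fun i ↦ add_nonneg_of_mem_uIcc_zero (hPs_nonneg i) (hPs_add_l i) (hl'_mem i), ?_, ?_, ?_⟩
    · rw [sum_add_distrib, hPs_sum, hl'_sum, add_zero]
    · simp_rw [add_sub_cancel_left]
      exact (sum_le_sum fun i _ ↦ hl'_abs i).trans hlstar_l1
    · simp_rw [add_sub_cancel_left]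
  calc ∑ i, |lstar i - ltil i| ≤ ∑ i, |lstar i - l' i| := hltil_min l' hfeasible
    _ ≤ ∑ i, (|lstar i - l i| + |l i - l' i|) :=
      sum_le_sum fun i _ ↦ abs_sub_le (lstar i) (l i) (l' i)
    _ = ∑ i, |lstar i - l i| + |∑ i, l i| := by rw [sum_add_distrib, hl'_dist]
    _ ≤ 2 * ∑ i, |lstar i - l i| := by
      linarith [abs_sum_le_sum_abs_sub_of_sum_eq_zero (f := l) hlstar_sum]

/-- clipping lemma. `ℓ` is the componentwise clipping of `ℓ*` so that
`P^s + ℓ` stays in `[0,1]^D`, and `ℓ̃` is the ℓ1-closest element of the TVDC perturbation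
set of `P^s` to `ℓ*`; then `‖ℓ* - ℓ̃‖₁ ≤ 2‖ℓ* - ℓ‖₁`. -/
theorem clipping_projection_bound (D : ℕ) (u : ℝ) (hu : 0 ≤ u)
    (Phat Ps lstar l ltil : Fin D → ℝ)
    (hPhat : (∀ i, 0 ≤ Phat i) ∧ ∑ i, Phat i = 1)
    (hPs : (∀ i, 0 ≤ Ps i) ∧ ∑ i, Ps i = 1)
    (hlstar_sum : ∑ i, lstar i = 0)
    (hlstar_l1 : ∑ i, |lstar i| ≤ 2 * u)
    (hlstar_mem : ∀ i, 0 ≤ Phat i + lstar i ∧ Phat i + lstar i ≤ 1)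
    (hlstar_bd : ∀ i, -1 ≤ lstar i ∧ lstar i ≤ 1)
    -- ℓ is the componentwise clipping of ℓ* relative to P^s
    (hl : ∀ i, l i =
      if 0 ≤ Ps i + lstar i ∧ Ps i + lstar i ≤ 1 then lstar i
      else if 0 < lstar i then 1 - Ps i else -(Ps i))
    -- ℓ̃ is the ℓ1-projection of ℓ* onto the TVDC perturbation set of P^s
    (hltil_mem : (∃ q : Fin D → ℝ, (∀ i, 0 ≤ q i) ∧ (∑ i, q i = 1) ∧
        (∑ i, |q i - Ps i| ≤ 2 * u) ∧ ltil = fun i => q i - Ps i))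
    (hltil_min : ∀ m : Fin D → ℝ,
      (∃ q : Fin D → ℝ, (∀ i, 0 ≤ q i) ∧ (∑ i, q i = 1) ∧
        (∑ i, |q i - Ps i| ≤ 2 * u) ∧ m = fun i => q i - Ps i) →
      ∑ i, |lstar i - ltil i| ≤ ∑ i, |lstar i - m i|) :
    ∑ i, |lstar i - ltil i| ≤ 2 * ∑ i, |lstar i - l i| :=
  clipping_projection_bound_general D u Ps lstar l ltil hPs hlstar_sum hlstar_l1 hl hltil_min
end

section
/- Let p ∈ Δ_D be a probability vector and L ⊆ [D] an index set with Σ_{i∈L}(1 - p(i)) ≤ u. Then Σ_{i∈L} √(2p(i)(1-p(i)) ln(2/δ')/N) ≤ √(2u ln(2/δ')/N). -/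
/-- Cauchy–Schwarz bound: if `Σ_{i∈L}(1 - p i) ≤ u` for a probability
vector `p`, then `Σ_{i∈L} √(2 p(i)(1-p(i)) ln(2/δ')/N) ≤ √(2 u ln(2/δ')/N)`. -/
theorem sqrt_sum_bound_one_minus_p (D N : ℕ) (hN : 0 < N)
    (u δ' : ℝ) (hu : 0 ≤ u) (hδ' : 0 < δ') (hδ'1 : δ' < 1)
    (p : Fin D → ℝ) (hp : (∀ i, 0 ≤ p i) ∧ ∑ i, p i = 1)
    (L : Finset (Fin D)) (hL : ∑ i ∈ L, (1 - p i) ≤ u) :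
    ∑ i ∈ L, Real.sqrt (2 * p i * (1 - p i) * Real.log (2 / δ') / N)
      ≤ Real.sqrt (2 * u * Real.log (2 / δ') / N) := by
  obtain ⟨hp0, hp1⟩ := hp
  have hp1' : ∀ i, p i ≤ 1 := by
    intro i
    calc p i ≤ ∑ j, p j := Finset.single_le_sum (fun j _ => hp0 j) (Finset.mem_univ i)
    _ = 1 := hp1
  have hc : (0:ℝ) ≤ Real.log (2 / δ') := by
    apply Real.log_nonneg
    rw [le_div_iff₀ hδ']; linarith
  have hNpos : (0:ℝ) < N := by exact_mod_cast hN
  have key : ∑ i ∈ L, Real.sqrt (p i) * Real.sqrt (1 - p i)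
      ≤ Real.sqrt (∑ i ∈ L, p i) * Real.sqrt (∑ i ∈ L, (1 - p i)) :=
    Real.sum_sqrt_mul_sqrt_le L (fun i => hp0 i) (fun i => by linarith [hp1' i])
  have hsum1 : ∑ i ∈ L, p i ≤ 1 := by
    rw [← hp1]
    exact Finset.sum_le_sum_of_subset_of_nonneg (Finset.subset_univ L)
      (fun i _ _ => hp0 i)
  have h2 : Real.sqrt (∑ i ∈ L, p i) * Real.sqrt (∑ i ∈ L, (1 - p i))
      ≤ Real.sqrt u := by
    calc Real.sqrt (∑ i ∈ L, p i) * Real.sqrt (∑ i ∈ L, (1 - p i))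
        ≤ 1 * Real.sqrt u := by
          apply mul_le_mul
          · simpa using Real.sqrt_le_sqrt hsum1
          · exact Real.sqrt_le_sqrt hL
          · exact Real.sqrt_nonneg _
          · norm_num
      _ = Real.sqrt u := one_mul _
  have expand : ∀ i, Real.sqrt (2 * p i * (1 - p i) * Real.log (2 / δ') / N)
      = Real.sqrt (p i) * Real.sqrt (1 - p i) * Real.sqrt (2 * Real.log (2 / δ') / N) := by
    intro i
    rw [← Real.sqrt_mul (hp0 i), ← Real.sqrt_mul (mul_nonneg (hp0 i) (by linarith [hp1' i]))]
    congr 1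
    field_simp
  calc ∑ i ∈ L, Real.sqrt (2 * p i * (1 - p i) * Real.log (2 / δ') / N)
      = (∑ i ∈ L, Real.sqrt (p i) * Real.sqrt (1 - p i)) * Real.sqrt (2 * Real.log (2 / δ') / N) := by
        rw [Finset.sum_mul]; exact Finset.sum_congr rfl fun i _ => expand i
    _ ≤ Real.sqrt u * Real.sqrt (2 * Real.log (2 / δ') / N) := by
        apply mul_le_mul_of_nonneg_right (key.trans h2) (Real.sqrt_nonneg _)
    _ = Real.sqrt (2 * u * Real.log (2 / δ') / N) := by
        rw [← Real.sqrt_mul hu]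
        congr 1
        field_simp
end
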